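/- Let S be a finite set of primes and let E_N^S(0) = (1/N)·#{n : 1 ≤ n ≤ N, n is square-free, and no p ∈ S divides n}. Then for every N ≥ 4, |E_N^S(0) − (6/π²)·∏_{p∈S} p/(p+1)| ≤ C(S)·N^{−1/2}, where C(S) = 4·∏_{p∈S} (p−1)/p + (∏_{p∈S} p − 1) − ∏_{p∈S} (p−1). -/

import Mathlib

/-!
Since `∑_{d² ∣ n} μ d` is the indicator of square-free `n`, the count of square-free
`n ≤ N` coprime to `P = ∏_{p ∈ S} p` equals `∑_{d ≤ √N, (d, P) = 1} μ d · A(N / d²)`, where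
`A(M)` counts the integers in `[1, M]` coprime to `P`. Coprimality to `P` is `P`-periodic, so
`A(M) = φ(P)/P · M + O(1)`, with error at most `(P - 1)(P - φ(P))/P`. Each of the `√N` terms
thus contributes `O(1/N)`, and completing the sum to `∑_{(d, P) = 1} μ d / d²` costs the tail
`∑_{d > √N} d⁻² ≤ 2/√N`. The completed series is `6/π² · ∏_{p ∈ S} (1 - p⁻²)⁻¹` (remove the
Euler factors of `S` from `∑ μ d / d² = 1/ζ(2)` one at a time), and with
`φ(P)/P = ∏_{p ∈ S} (1 - p⁻¹)` the main term becomes `6/π² · ∏_{p ∈ S} p/(p + 1)`.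
-/

open Finset ArithmeticFunction
open scoped ArithmeticFunction.Moebius

theorem Nat.dvd_of_sq_dvd_sq_mul {a b d : ℕ} (ha : Squarefree a) (h : d ^ 2 ∣ b ^ 2 * a) :
    d ∣ b := by
  rcases Nat.eq_zero_or_pos (d.gcd b) with hg | hg
  · simp [(Nat.gcd_eq_zero_iff.mp hg).2]
  obtain ⟨g, d', b', hg, hcop, rfl, rfl⟩ := Nat.exists_coprime' hg
  have hd' : d' ^ 2 ∣ b' ^ 2 * a := by
    rw [mul_pow, mul_pow, mul_right_comm] at h
    exact Nat.dvd_of_mul_dvd_mul_right (by positivity) h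
  have hunit : IsUnit d' := ha d' (by simpa [sq] using (hcop.pow 2 2).dvd_of_dvd_mul_left hd')
  rw [Nat.isUnit_iff.mp hunit, one_mul]
  exact dvd_mul_left g b'

theorem Nat.sum_moebius_sq_dvd {n : ℕ} (hn : n ≠ 0) :
    ∑ d ∈ n.divisors with d ^ 2 ∣ n, μ d = if Squarefree n then 1 else 0 := by
  obtain ⟨a, b, rfl, ha⟩ := Nat.sq_mul_squarefree n
  have hb : b ≠ 0 := by rintro rfl; simp at hn
  have hfilter : {d ∈ (b ^ 2 * a).divisors | d ^ 2 ∣ b ^ 2 * a} = b.divisors := by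
    ext d
    simp only [mem_filter, Nat.mem_divisors]
    refine ⟨fun ⟨_, hd⟩ => ⟨Nat.dvd_of_sq_dvd_sq_mul ha hd, hb⟩, fun ⟨hd, _⟩ => ?_⟩
    have hsq : d ^ 2 ∣ b ^ 2 * a := (pow_dvd_pow_of_dvd hd 2).mul_right a
    exact ⟨⟨(dvd_pow_self d two_ne_zero).trans hsq, hn⟩, hsq⟩
  have hsqfree : Squarefree (b ^ 2 * a) ↔ b = 1 := by
    refine ⟨fun h => Nat.isUnit_iff.mp (h b ?_), fun h => by simpa [h] using ha⟩
    exact ⟨a, by ring⟩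
  rw [hfilter, ← coe_mul_zeta_apply, moebius_mul_coe_zeta, one_apply]
  exact if_congr hsqfree.symm rfl rfl

theorem Nat.totient_prod_primes {S : Finset ℕ} (hS : ∀ p ∈ S, p.Prime) :
    (∏ p ∈ S, p).totient = ∏ p ∈ S, (p - 1) := by
  have h := Nat.totient_mul_prod_primeFactors (∏ p ∈ S, p)
  rw [Nat.primeFactors_prod hS, mul_comm] at h
  exact Nat.eq_of_mul_eq_mul_left (prod_pos fun p hp => (hS p hp).pos) h

theorem norm_tsum_sub_sum_Icc_le {E : Type*} [NormedAddCommGroup E] [CompleteSpace E]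
    {f : ℕ → E} (hf : ∀ d, ‖f d‖ ≤ ((d : ℝ) ^ 2)⁻¹) (K : ℕ) :
    ‖∑' d, f d - ∑ d ∈ Icc 1 K, f d‖ ≤ 2 / (K + 1) := by
  have hinv : Summable fun d : ℕ => ((d : ℝ) ^ 2)⁻¹ :=
    Real.summable_nat_pow_inv.mpr one_lt_two
  have hf_norm : Summable fun d => ‖f d‖ := hinv.of_nonneg_of_le (fun _ => norm_nonneg _) hf
  -- At `d = 0` the hypothesis reads `‖f 0‖ ≤ 0⁻¹ = 0`.
  have hf0 : f 0 = 0 := norm_le_zero_iff.mp (by simpa using hf 0)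
  have hhead : ∑ d ∈ Icc 1 K, f d = ∑ d ∈ range (K + 1), f d := by
    rw [range_eq_Ico, sum_eq_sum_Ico_succ_bot (Nat.succ_pos K), hf0, zero_add]
    rfl
  have hshift {g : ℕ → ℝ} (hg : Summable g) : Summable fun i => g (i + (K + 1)) :=
    hg.comp_injective (add_left_injective (K + 1))
  rw [hhead, ← (hf_norm.of_norm).sum_add_tsum_nat_add (K + 1), add_sub_cancel_left]
  calc ‖∑' i, f (i + (K + 1))‖ ≤ ∑' i, ‖f (i + (K + 1))‖ :=
        norm_tsum_le_tsum_norm (hshift hf_norm)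
    _ ≤ ∑' i, (((i + (K + 1) : ℕ) : ℝ) ^ 2)⁻¹ :=
        (hshift hf_norm).tsum_le_tsum (fun i => hf _) (hshift hinv)
    _ ≤ 2 / (K + 1) := by
        refine (hshift hinv).tsum_le_of_sum_range_le fun n => ?_
        have hreindex : ∑ i ∈ range n, (((i + (K + 1) : ℕ) : ℝ) ^ 2)⁻¹
            = ∑ i ∈ Ioo K (K + 1 + n), ((i : ℝ) ^ 2)⁻¹ := by
          rw [← Ico_add_one_left_eq_Ioo, sum_Ico_eq_sum_range, Nat.add_sub_cancel_left]
          exact sum_congr rfl fun i _ => by rw [add_comm i]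
        rw [hreindex]
        exact sum_Ioo_inv_sq_le K (K + 1 + n)

def coprimeCount (P M : ℕ) : ℕ := #{m ∈ Icc 1 M | m.Coprime P}

theorem coprimeCount_zero (P : ℕ) : coprimeCount P 0 = 0 := rfl

theorem coprimeCount_le (P M : ℕ) : coprimeCount P M ≤ M :=
  (card_filter_le _ _).trans (by simp)

theorem coprimeCount_add (P M t : ℕ) :
    coprimeCount P (M + t) = coprimeCount P M + #{m ∈ Ico (M + 1) (M + 1 + t) | m.Coprime P} := by
  have hsplit : Icc 1 (M + t) = Icc 1 M ∪ Ico (M + 1) (M + 1 + t) := by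
    ext x
    simp only [mem_union, mem_Icc, mem_Ico]
    omega
  rw [coprimeCount, hsplit, filter_union, card_union_of_disjoint, coprimeCount]
  refine disjoint_filter_filter (disjoint_left.mpr fun x hx hx' => ?_)
  simp only [mem_Icc, mem_Ico] at hx hx'
  omega

theorem coprimeCount_le_add (P M t : ℕ) : coprimeCount P M ≤ coprimeCount P (M + t) := by
  rw [coprimeCount_add]
  exact Nat.le_add_right _ _

theorem coprimeCount_add_le (P M t : ℕ) : coprimeCount P (M + t) ≤ coprimeCount P M + t := by
  rw [coprimeCount_add]
  exact Nat.add_le_add_left ((card_filter_le _ _).trans (by simp)) _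

theorem coprimeCount_add_mul (P M q : ℕ) :
    coprimeCount P (M + q * P) = coprimeCount P M + q * P.totient := by
  induction q with
  | zero => simp
  | succ q ih =>
    have hperiod : #{m ∈ Ico (M + q * P + 1) (M + q * P + 1 + P) | m.Coprime P} = P.totient := by
      simp_rw [Nat.coprime_comm]
      exact Nat.filter_coprime_Ico_eq_totient P _
    rw [add_one_mul, ← add_assoc, coprimeCount_add, ih, hperiod, add_one_mul, add_assoc]

theorem coprimeCount_self (P : ℕ) : coprimeCount P P = P.totient := by
  simpa [coprimeCount_zero] using coprimeCount_add_mul P 0 1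

theorem abs_coprimeCount_sub_le {P : ℕ} (hP : 0 < P) (M : ℕ) :
    |(coprimeCount P M : ℝ) - P.totient / P * M| ≤ (P - 1) * (P - P.totient) / P := by
  -- Reduce to `r = M % P`, where `φ(P) - (P - r) ≤ coprimeCount P r ≤ min r φ(P)`.
  set r := M % P
  have hr : r < P := Nat.mod_lt M hP
  have hM : coprimeCount P M = coprimeCount P r + M / P * P.totient := by
    rw [← coprimeCount_add_mul, Nat.mod_add_div' M P]
  have hMr : (M : ℝ) = r + (M / P : ℕ) * P := by exact_mod_cast (Nat.mod_add_div' M P).symm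
  have hPr : (0 : ℝ) < P := by exact_mod_cast hP
  have hreduce : (coprimeCount P M : ℝ) - P.totient / P * M
      = (coprimeCount P r * P - P.totient * r) / P := by
    rw [hM, hMr]
    push_cast
    field_simp
    ring
  have hle_r : (coprimeCount P r : ℝ) ≤ r := by exact_mod_cast coprimeCount_le P r
  have hrP : (r : ℝ) + 1 ≤ P := by exact_mod_cast hr
  have hle_φ : (coprimeCount P r : ℝ) ≤ P.totient := by
    rw [← coprimeCount_self]
    exact_mod_cast (Nat.add_sub_cancel' hr.le) ▸ coprimeCount_le_add P r (P - r)
  have hge : (P.totient : ℝ) ≤ coprimeCount P r + (P - r) := by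
    have := (Nat.add_sub_cancel' hr.le) ▸ coprimeCount_add_le P r (P - r)
    rw [coprimeCount_self] at this
    have := (Nat.cast_le (α := ℝ)).mpr this
    push_cast [Nat.cast_sub hr.le] at this
    linarith
  rw [hreduce, abs_div, abs_of_pos hPr, div_le_div_iff_of_pos_right hPr, abs_le]
  constructor
  · rcases Nat.eq_zero_or_pos r with hr0 | hr0
    · rw [hr0, coprimeCount_zero]
      push_cast
      nlinarith
    · have : (1 : ℝ) ≤ r := by exact_mod_cast hr0
      nlinarith
  · rcases le_or_gt (r : ℝ) P.totient with h | h <;> nlinarith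

theorem abs_coprimeCount_floor_sub_le {P : ℕ} (hP : 0 < P) {x : ℝ} (hx : 0 ≤ x) :
    |(coprimeCount P ⌊x⌋₊ : ℝ) - P.totient / P * x|
      ≤ (P - 1) * (P - P.totient) / P + P.totient / P := by
  have hdensity : P.totient / P * |(⌊x⌋₊ : ℝ) - x| ≤ P.totient / P := by
    refine mul_le_of_le_one_right (by positivity) (abs_le.mpr ⟨?_, ?_⟩)
    · linarith [Nat.lt_floor_add_one x]
    · linarith [Nat.floor_le hx]
  calc |(coprimeCount P ⌊x⌋₊ : ℝ) - P.totient / P * x|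
      = |((coprimeCount P ⌊x⌋₊ : ℝ) - P.totient / P * ⌊x⌋₊)
          + P.totient / P * (⌊x⌋₊ - x)| := by
        ring_nf
    _ ≤ _ := by
      refine (abs_add_le _ _).trans (add_le_add (abs_coprimeCount_sub_le hP _) ?_)
      rwa [abs_mul, abs_of_nonneg (by positivity)]

theorem card_filter_coprime_dvd_eq {P k : ℕ} (hk : 0 < k) (hkP : k.Coprime P) (N : ℕ) :
    #{n ∈ Icc 1 N | n.Coprime P ∧ k ∣ n} = coprimeCount P (N / k) := by
  refine card_nbij' (· / k) (k * ·) (fun n hn => ?_) (fun m hm => ?_)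
    (fun n hn => Nat.mul_div_cancel' (mem_filter.mp hn).2.2)
    (fun m _ => Nat.mul_div_cancel_left m hk)
  · simp only [coe_filter, Set.mem_ofPred_eq, mem_Icc] at hn ⊢
    obtain ⟨⟨hn1, hnN⟩, hcop, hkn⟩ := hn
    exact ⟨⟨(Nat.one_le_div_iff hk).mpr (Nat.le_of_dvd hn1 hkn), Nat.div_le_div_right hnN⟩,
      hcop.coprime_dvd_left (Nat.div_dvd_of_dvd hkn)⟩
  · simp only [coe_filter, Set.mem_ofPred_eq, mem_Icc] at hm ⊢
    obtain ⟨⟨hm1, hmN⟩, hcop⟩ := hm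
    exact ⟨⟨Nat.one_le_iff_ne_zero.mpr (by positivity),
      mul_comm m k ▸ (Nat.le_div_iff_mul_le hk).mp hmN⟩, hkP.mul_left hcop, dvd_mul_right k m⟩

def coprimeMoebius (P d : ℕ) : ℤ := if d.Coprime P then μ d else 0

theorem card_squarefree_coprime_eq_sum (P N : ℕ) :
    (#{n ∈ Icc 1 N | Squarefree n ∧ n.Coprime P} : ℤ)
      = ∑ d ∈ Icc 1 N.sqrt, coprimeMoebius P d * coprimeCount P (N / d ^ 2) := by
  have hdivisors : ∀ n ∈ Icc 1 N,
      {d ∈ Icc 1 N.sqrt | d ^ 2 ∣ n} = {d ∈ n.divisors | d ^ 2 ∣ n} := by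
    intro n hn
    rw [mem_Icc] at hn
    ext d
    simp only [mem_filter, mem_Icc, Nat.mem_divisors]
    refine and_congr_left fun hd =>
      ⟨fun _ => ⟨(dvd_pow_self d two_ne_zero).trans hd, by omega⟩, fun _ =>
        ⟨Nat.pos_of_ne_zero ?_, Nat.le_sqrt'.mpr ((Nat.le_of_dvd (by omega) hd).trans hn.2)⟩⟩
    rintro rfl
    simp at hd
    omega
  calc (#{n ∈ Icc 1 N | Squarefree n ∧ n.Coprime P} : ℤ)
      = ∑ n ∈ Icc 1 N with n.Coprime P, if Squarefree n then 1 else 0 := by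
        rw [sum_boole, filter_filter]
        simp [and_comm]
    _ = ∑ n ∈ Icc 1 N with n.Coprime P, ∑ d ∈ Icc 1 N.sqrt with d ^ 2 ∣ n, μ d := by
        refine sum_congr rfl fun n hn => ?_
        have hn := (mem_filter.mp hn).1
        rw [hdivisors n hn, Nat.sum_moebius_sq_dvd (by rw [mem_Icc] at hn; omega)]
    _ = ∑ d ∈ Icc 1 N.sqrt, ∑ n ∈ Icc 1 N with n.Coprime P ∧ d ^ 2 ∣ n, μ d := by
        refine sum_comm' fun n d => ?_
        simp only [mem_filter]
        tauto
    _ = ∑ d ∈ Icc 1 N.sqrt, coprimeMoebius P d * coprimeCount P (N / d ^ 2) := by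
        refine sum_congr rfl fun d hd => ?_
        rw [sum_const, nsmul_eq_mul, mul_comm, coprimeMoebius]
        split_ifs with hdP
        · rw [card_filter_coprime_dvd_eq (pow_pos (mem_Icc.mp hd).1 2) (hdP.pow_left 2)]
        · rw [card_eq_zero.mpr, Nat.cast_zero, mul_zero, zero_mul]
          refine filter_eq_empty_iff.mpr fun n _ ⟨hnP, hdn⟩ => hdP ?_
          exact hnP.coprime_dvd_left ((dvd_pow_self d two_ne_zero).trans hdn)

theorem abs_coprimeMoebius_le_one (P d : ℕ) : |(coprimeMoebius P d : ℝ)| ≤ 1 := by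
  rw [coprimeMoebius]
  split_ifs
  · exact_mod_cast abs_moebius_le_one
  · simp

theorem norm_coprimeMoebius_div_sq_le (P d : ℕ) :
    ‖(coprimeMoebius P d : ℝ) / d ^ 2‖ ≤ ((d : ℝ) ^ 2)⁻¹ := by
  rw [Real.norm_eq_abs, abs_div, abs_of_nonneg (by positivity : (0 : ℝ) ≤ d ^ 2),
    div_eq_mul_inv]
  exact mul_le_of_le_one_left (by positivity) (abs_coprimeMoebius_le_one P d)

theorem summable_coprimeMoebius_div_sq (P : ℕ) :
    Summable fun d => (coprimeMoebius P d : ℝ) / d ^ 2 :=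
  (Real.summable_nat_pow_inv.mpr one_lt_two).of_norm_bounded (norm_coprimeMoebius_div_sq_le P)

theorem tsum_moebius_div_sq : ∑' d, (μ d : ℝ) / d ^ 2 = 6 / Real.pi ^ 2 := by
  have hs : 1 < (2 : ℂ).re := by norm_num
  have hL : LSeries (fun n => (μ n : ℂ)) 2 = 6 / (Real.pi : ℂ) ^ 2 := by
    have h := LSeries_zeta_mul_Lseries_moebius hs
    rw [LSeries_zeta_eq_riemannZeta hs, riemannZeta_two] at h
    have hπ : (Real.pi : ℂ) ≠ 0 := Complex.ofReal_ne_zero.mpr Real.pi_ne_zero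
    field_simp at h ⊢
    linear_combination h
  have hterm (n : ℕ) :
      (((μ n : ℝ) / n ^ 2 : ℝ) : ℂ) = LSeries.term (fun n => (μ n : ℂ)) 2 n := by
    rcases eq_or_ne n 0 with rfl | hn
    · simp
    · rw [LSeries.term_of_ne_zero hn, show (2 : ℂ) = ((2 : ℕ) : ℂ) by norm_num,
        Complex.cpow_natCast]
      push_cast
      rfl
  apply Complex.ofReal_injective
  rw [Complex.ofReal_tsum, tsum_congr hterm]
  push_cast
  exact hL

theorem coprimeMoebius_eq_add_ite_dvd {p : ℕ} (hp : p.Prime) (P d : ℕ) :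
    coprimeMoebius P d = coprimeMoebius (p * P) d + if p ∣ d then coprimeMoebius P d else 0 := by
  have hcop : d.Coprime p ↔ ¬p ∣ d := Nat.coprime_comm.trans hp.coprime_iff_not_dvd
  simp only [coprimeMoebius, Nat.coprime_mul_iff_right, hcop]
  split_ifs <;> simp_all

theorem coprimeMoebius_prime_mul {p P : ℕ} (hp : p.Prime) (hpP : ¬p ∣ P) (e : ℕ) :
    coprimeMoebius P (p * e) = -coprimeMoebius (p * P) e := by
  by_cases hpe : p ∣ e
  · have hμ : μ (p * e) = 0 := moebius_eq_zero_of_not_squarefree fun h =>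
      hp.one_lt.ne' (Nat.isUnit_iff.mp (h p (mul_dvd_mul_left p hpe)))
    have hnot : ¬e.Coprime (p * P) := fun h => hp.one_lt.ne'
      (Nat.eq_one_of_dvd_coprimes (h.coprime_dvd_right (dvd_mul_right p P)) hpe dvd_rfl)
    simp [coprimeMoebius, hμ, hnot]
  · have hpe' : p.Coprime e := hp.coprime_iff_not_dvd.mpr hpe
    have hpP' : p.Coprime P := hp.coprime_iff_not_dvd.mpr hpP
    have hcop : (p * e).Coprime P ↔ e.Coprime (p * P) := by
      rw [Nat.coprime_mul_iff_left, Nat.coprime_mul_iff_right]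
      exact and_congr_left fun _ => iff_of_true hpP' (Nat.coprime_comm.mp hpe')
    rw [coprimeMoebius, coprimeMoebius, if_congr hcop rfl rfl,
      isMultiplicative_moebius.map_mul_of_coprime hpe', moebius_apply_prime hp]
    split_ifs <;> simp

theorem tsum_coprimeMoebius_div_sq_eq_one_sub_mul {p P : ℕ} (hp : p.Prime) (hpP : ¬p ∣ P) :
    ∑' d, (coprimeMoebius P d : ℝ) / d ^ 2
      = (1 - ((p : ℝ) ^ 2)⁻¹) * ∑' d, (coprimeMoebius (p * P) d : ℝ) / d ^ 2 := by
  set g : ℕ → ℝ := fun d => if p ∣ d then (coprimeMoebius P d : ℝ) / d ^ 2 else 0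
  have hsplit (d : ℕ) : (coprimeMoebius P d : ℝ) / d ^ 2
      = (coprimeMoebius (p * P) d : ℝ) / d ^ 2 + g d := by
    rw [coprimeMoebius_eq_add_ite_dvd hp P d]
    split_ifs <;> simp [g, *, add_div]
  have hg : Summable g := by
    simpa only [hsplit, add_sub_cancel_left] using
      (summable_coprimeMoebius_div_sq P).sub (summable_coprimeMoebius_div_sq (p * P))
  have hmultiples :
      ∑' d, g d = -((p : ℝ) ^ 2)⁻¹ * ∑' e, (coprimeMoebius (p * P) e : ℝ) / e ^ 2 := by
    have hsupport : Function.support g ⊆ Set.range (p * ·) := fun d hd => by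
      by_contra h
      exact hd (if_neg fun ⟨e, he⟩ => h ⟨e, he.symm⟩)
    rw [← (mul_right_injective₀ hp.ne_zero).tsum_eq hsupport, ← tsum_mul_left]
    refine tsum_congr fun e => ?_
    simp only [g, dvd_mul_right, if_true, coprimeMoebius_prime_mul hp hpP]
    push_cast
    have : (p : ℝ) ≠ 0 := by exact_mod_cast hp.ne_zero
    field_simp
  rw [tsum_congr hsplit, (summable_coprimeMoebius_div_sq (p * P)).tsum_add hg, hmultiples]
  ring

theorem prod_mul_tsum_coprimeMoebius_div_sq {S : Finset ℕ} (hS : ∀ p ∈ S, p.Prime) :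
    (∏ p ∈ S, (1 - ((p : ℝ) ^ 2)⁻¹))
        * ∑' d, (coprimeMoebius (∏ p ∈ S, p) d : ℝ) / d ^ 2
      = 6 / Real.pi ^ 2 := by
  induction S using Finset.induction_on with
  | empty => simpa [coprimeMoebius] using tsum_moebius_div_sq
  | insert a S ha ih =>
    have hS' : ∀ p ∈ S, p.Prime := fun p hp => hS p (mem_insert_of_mem hp)
    have ha' : a.Prime := hS a (mem_insert_self a S)
    have hdvd : ¬a ∣ ∏ p ∈ S, p := fun h => by
      obtain ⟨q, hq, haq⟩ := (Prime.dvd_finsetProd_iff ha'.prime _).mp h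
      exact ha ((Nat.prime_dvd_prime_iff_eq ha' (hS' q hq)).mp haq ▸ hq)
    rw [prod_insert ha, prod_insert ha, mul_comm (1 - _), mul_assoc,
      ← tsum_coprimeMoebius_div_sq_eq_one_sub_mul ha' hdvd, ih hS']

theorem abs_card_squarefree_coprime_div_sub_le {P N : ℕ} (hP : 0 < P) (hN : 0 < N) :
    |(#{n ∈ Icc 1 N | Squarefree n ∧ n.Coprime P} : ℝ) / N
        - P.totient / P * ∑' d, (coprimeMoebius P d : ℝ) / d ^ 2|
      ≤ ((P - 1) * (P - P.totient) / P + 3 * (P.totient / P)) / √N := by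
  set K := N.sqrt
  set δ : ℝ := P.totient / P
  set B : ℝ := (P - 1) * (P - P.totient) / P + δ
  set a : ℕ → ℝ := fun d => (coprimeMoebius P d : ℝ) / d ^ 2
  have hNr : (0 : ℝ) < N := by exact_mod_cast hN
  have hδ : 0 ≤ δ := by positivity
  have hB : 0 ≤ B := (abs_nonneg _).trans (abs_coprimeCount_floor_sub_le hP le_rfl)
  have hcount : (#{n ∈ Icc 1 N | Squarefree n ∧ n.Coprime P} : ℝ)
      = ∑ d ∈ Icc 1 K, (coprimeMoebius P d : ℝ) * coprimeCount P (N / d ^ 2) := by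
    exact_mod_cast card_squarefree_coprime_eq_sum P N
  have hterm (d : ℕ) : |(coprimeMoebius P d : ℝ) * coprimeCount P (N / d ^ 2) / N - δ * a d|
      ≤ B / N := by
    have hfloor : ⌊(N : ℝ) / d ^ 2⌋₊ = N / d ^ 2 := by
      exact_mod_cast Nat.floor_div_eq_div N (d ^ 2)
    have hfactor : (coprimeMoebius P d : ℝ) * coprimeCount P (N / d ^ 2) / N - δ * a d
        = (coprimeMoebius P d : ℝ) / N
          * (coprimeCount P ⌊(N : ℝ) / d ^ 2⌋₊ - δ * ((N : ℝ) / d ^ 2)) := by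
      rw [hfloor]
      field_simp
      ring
    rw [hfactor, abs_mul, abs_div, abs_of_pos hNr, div_mul_eq_mul_div,
      div_le_div_iff_of_pos_right hNr]
    exact (mul_le_of_le_one_left (abs_nonneg _) (abs_coprimeMoebius_le_one P d)).trans
      (abs_coprimeCount_floor_sub_le hP (by positivity))
  have htail : |∑' d, a d - ∑ d ∈ Icc 1 K, a d| ≤ 2 / (K + 1) :=
    norm_tsum_sub_sum_Icc_le (norm_coprimeMoebius_div_sq_le P) K
  have hK : (K : ℝ) / N ≤ 1 / √N := by
    rw [div_le_div_iff₀ hNr (by positivity), one_mul]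
    calc (K : ℝ) * √N ≤ √N * √N :=
          mul_le_mul_of_nonneg_right Real.nat_sqrt_le_real_sqrt (by positivity)
      _ = N := Real.mul_self_sqrt hNr.le
  calc _ = |∑ d ∈ Icc 1 K,
              ((coprimeMoebius P d : ℝ) * coprimeCount P (N / d ^ 2) / N - δ * a d)
          - δ * (∑' d, a d - ∑ d ∈ Icc 1 K, a d)| := by
        rw [hcount, sum_sub_distrib, ← sum_div, ← mul_sum]
        ring_nf
    _ ≤ K * (B / N) + δ * (2 / (K + 1)) := by
        refine (abs_sub _ _).trans (add_le_add ?_ ?_)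
        · refine (abs_sum_le_sum_abs _ _).trans ((sum_le_sum fun d _ => hterm d).trans ?_)
          simp
        · rw [abs_mul, abs_of_nonneg hδ]
          exact mul_le_mul_of_nonneg_left htail hδ
    _ ≤ B / √N + δ * (2 / √N) := by
        gcongr
        · calc (K : ℝ) * (B / N) = K / N * B := by ring
            _ ≤ 1 / √N * B := mul_le_mul_of_nonneg_right hK hB
            _ = B / √N := by ring
        · exact Real.real_sqrt_le_nat_sqrt_succ
    _ = _ := by ring

/-- For a finite set `S` of primes, the density of square-free numbers up to `N`
divisible by no prime of `S` differs from `(6/π²)·∏_{p∈S} p/(p+1)` by at most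
`C(S)·N^(-1/2)` for every `N ≥ 4`, where
`C(S) = 4·∏_{p∈S} (p−1)/p + (∏_{p∈S} p − 1) − ∏_{p∈S} (p−1)`. -/
theorem density_of_squarefree_avoiding_primes (S : Finset ℕ) (hS : ∀ p ∈ S, p.Prime) :
    ∀ N : ℕ, 4 ≤ N →
      |(((Finset.Icc 1 N).filter
            (fun n : ℕ => Squarefree n ∧ ∀ p ∈ S, ¬ p ∣ n)).card : ℝ) / (N : ℝ)
          - (6 / Real.pi ^ 2) * ∏ p ∈ S, (p : ℝ) / ((p : ℝ) + 1)|
        ≤ (4 * ∏ p ∈ S, ((p : ℝ) - 1) / (p : ℝ)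
            + ((∏ p ∈ S, (p : ℝ)) - 1) - ∏ p ∈ S, ((p : ℝ) - 1)) / Real.sqrt N := by
  intro N hN
  set P := ∏ p ∈ S, p
  have hP : 0 < P := prod_pos fun p hp => (hS p hp).pos
  have hPr : (P : ℝ) = ∏ p ∈ S, (p : ℝ) := Nat.cast_prod _ _
  have hφ : (P.totient : ℝ) = ∏ p ∈ S, ((p : ℝ) - 1) := by
    rw [Nat.totient_prod_primes hS, Nat.cast_prod]
    exact prod_congr rfl fun p hp => Nat.cast_pred (hS p hp).pos
  have hcoprime (n : ℕ) : (∀ p ∈ S, ¬p ∣ n) ↔ n.Coprime P := by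
    rw [Nat.coprime_prod_right_iff]
    exact forall₂_congr fun p hp => (Nat.coprime_comm.trans (hS p hp).coprime_iff_not_dvd).symm
  have hfactor : (∏ p ∈ S, (1 - ((p : ℝ) ^ 2)⁻¹)) * ∏ p ∈ S, (p : ℝ) / (p + 1)
      = P.totient / P := by
    rw [← prod_mul_distrib, hφ, hPr, ← prod_div_distrib]
    refine prod_congr rfl fun p hp => ?_
    have : (p : ℝ) ≠ 0 := by exact_mod_cast (hS p hp).ne_zero
    field_simp
    ring
  rw [filter_congr fun n _ => and_congr_right' (hcoprime n),
    ← prod_mul_tsum_coprimeMoebius_div_sq hS, mul_right_comm, hfactor]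
  convert abs_card_squarefree_coprime_div_sub_le hP (by omega : 0 < N) using 2
  have : (P : ℝ) ≠ 0 := by exact_mod_cast hP.ne'
  rw [prod_div_distrib, ← hφ, ← hPr]
  field_simp
  ring
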